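/- For n ≥ 3, let L_n be the language accepted by the DFA over {a,b} with states {0,…,n−1}, initial state 0, final state n−1, a acting as the cycle (1,…,n−1) (fixing 0), and b acting as the transposition (0,1). Then the state complexity of L_n* is exactly 2^{n−1} + 2^{n−2}. -/

import Mathlib

/-!
`L∗` is accepted by the subset automaton that, on top of simulating `L_n`, re-enters the initial
state whenever a final state is reached, together with a fresh accepting initial state. For the
witness, with `a` acting as a rotation of `{1, …, n-1}` and `b` as the swap `(0 1)`, the reachable
subsets are exactly the nonempty `S` with `n-1 ∈ S → 0 ∈ S`: they are built by induction on `|S|`,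
using `a` to rotate and `b` to turn state `0` into state `1`. Any two states of this automaton are
distinguishable, since `a^(n-1-q)` (for `q ≠ 0`) and `b a^(n-2)` (for `q = 0`) lead to acceptance
exactly from the sets containing `q`. By Myhill–Nerode the state complexity is then the number of
reachable states, `1 + (2^n - 1 - 2^(n-2)) = 2^(n-1) + 2^(n-2)`.
-/

open scoped Computability

/-- The state complexity of a language: the least number of states of a DFA accepting it. -/
noncomputable def stateComplexity {α : Type*} (L : Language α) : ℕ :=
  sInf {k : ℕ | ∃ M : DFA α (Fin k), M.accepts = L}

theorem Finset.card_filter_mem_and_notMem {σ : Type*} [Fintype σ] [DecidableEq σ] {x y : σ}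
    (hxy : x ≠ y) :
    (univ.filter fun S : Finset σ => x ∈ S ∧ y ∉ S).card = 2 ^ (Fintype.card σ - 2) := by
  have himage : univ.filter (fun S : Finset σ => x ∈ S ∧ y ∉ S) =
      ({x, y}ᶜ : Finset σ).powerset.image (insert x) := by
    ext S
    simp only [mem_filter, mem_univ, true_and, mem_image, mem_powerset]
    constructor
    · rintro ⟨hx, hy⟩
      refine ⟨S.erase x, fun z hz => ?_, insert_erase hx⟩
      simp only [mem_compl, mem_insert, mem_singleton, not_or]
      exact ⟨ne_of_mem_erase hz, fun h => hy (h ▸ mem_of_mem_erase hz)⟩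
    · rintro ⟨T, hT, rfl⟩
      refine ⟨mem_insert_self x T, fun hy => ?_⟩
      rcases mem_insert.mp hy with h | h
      · exact hxy h.symm
      · simpa using hT h
  rw [himage, card_image_of_injOn, card_powerset, card_compl, card_pair hxy]
  intro T hT T' hT' h
  have hxT (U : Finset σ) (hU : U ∈ (({x, y}ᶜ : Finset σ).powerset : Set (Finset σ))) : x ∉ U :=
    fun hx => by simpa using mem_powerset.mp hU hx
  rw [← erase_insert (hxT T hT), ← erase_insert (hxT T' hT'), h]

open Fin.NatCast in
theorem Fin.val_add_natCast_of_lt {n : ℕ} [NeZero n] {x : Fin n} {m : ℕ} (h : x.val + m < n) :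
    (x + m).val = x.val + m := by
  rw [Fin.val_add, Fin.val_natCast, Nat.mod_eq_of_lt (by omega : m < n), Nat.mod_eq_of_lt h]

theorem stateComplexity_eq_natCard_range_leftQuotient {α : Type*} (L : Language α)
    (hL : (Set.range L.leftQuotient).Finite) :
    stateComplexity L = Nat.card (Set.range L.leftQuotient) := by
  have := hL.to_subtype
  have hmem : Nat.card (Set.range L.leftQuotient) ∈ {k | ∃ M : DFA α (Fin k), M.accepts = L} :=
    ⟨DFA.reindex (Finite.equivFin _) L.toDFA, by rw [DFA.accepts_reindex, Language.accepts_toDFA]⟩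
  refine le_antisymm (Nat.sInf_le hmem) (le_csInf ⟨_, hmem⟩ ?_)
  rintro k ⟨N, rfl⟩
  calc Nat.card (Set.range N.accepts.leftQuotient)
      ≤ Nat.card (Set.range N.acceptsFrom) :=
        Nat.card_mono (Set.finite_range _) (by
          rw [Language.leftQuotient_accepts]; exact Set.range_comp_subset_range _ _)
    _ ≤ k := (Finite.card_range_le _).trans_eq (Nat.card_eq_fintype_card.trans (Fintype.card_fin k))

theorem DFA.stateComplexity_accepts {α σ : Type*} [Finite σ] (D : DFA α σ)
    (hD : Function.Injective D.acceptsFrom) :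
    stateComplexity D.accepts = Nat.card (Set.range D.eval) := by
  have hrange : Set.range D.accepts.leftQuotient = D.acceptsFrom '' Set.range D.eval := by
    rw [Language.leftQuotient_accepts, Set.range_comp]
  rw [stateComplexity_eq_natCard_range_leftQuotient _ (hrange ▸ Set.toFinite _),
    hrange, Nat.card_image_of_injective hD]

theorem List.exists_append_eq_append_singleton_iff {α : Type*} {w : List α} {c : α}
    {P : List α → List α → Prop} :
    (∃ u v, w ++ [c] = u ++ v ∧ P u v) ↔ P (w ++ [c]) [] ∨ ∃ u v, w = u ++ v ∧ P u (v ++ [c]) := by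
  constructor
  · rintro ⟨u, v, huv, hP⟩
    rcases List.eq_nil_or_concat v with rfl | ⟨v, c', rfl⟩
    · rw [List.append_nil] at huv
      exact .inl (huv ▸ hP)
    · rw [List.concat_eq_append] at huv hP
      rw [← List.append_assoc] at huv
      obtain ⟨rfl, rfl⟩ := List.append_inj' huv rfl |>.imp_right List.singleton_inj.mp
      exact .inr ⟨u, v, rfl, hP⟩
  · rintro (hP | ⟨u, v, rfl, hP⟩)
    · exact ⟨_, [], (List.append_nil _).symm, hP⟩
    · exact ⟨u, v ++ [c], List.append_assoc _ _ _, hP⟩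

theorem Language.append_singleton_mem_kstar_iff {α : Type*} {L : Language α} {w : List α} {c : α} :
    w ++ [c] ∈ L∗ ↔ ∃ u v, w = u ++ v ∧ u ∈ L∗ ∧ v ++ [c] ∈ L := by
  constructor
  · rw [Language.mem_kstar_iff_exists_nonempty]
    rintro ⟨S, hS, hL⟩
    rcases List.eq_nil_or_concat S with rfl | ⟨S, y, rfl⟩
    · simp at hS
    rw [List.concat_eq_append] at hL
    obtain ⟨hy, hyne⟩ := hL y (by simp)
    obtain ⟨v, c', rfl⟩ := (List.eq_nil_or_concat y).resolve_left hyne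
    rw [List.concat_eq_append, List.concat_eq_append, List.flatten_append,
      List.flatten_singleton, ← List.append_assoc] at *
    obtain ⟨rfl, rfl⟩ := List.append_inj' hS rfl |>.imp_right List.singleton_inj.mp
    exact ⟨S.flatten, v, rfl,
      Language.join_mem_kstar fun z hz => (hL z (List.mem_append_left _ hz)).1, hy⟩
  · rintro ⟨u, v, rfl, hu, hv⟩
    rw [List.append_assoc]
    exact kstar_mul_le_kstar (α := Language α) (Language.append_mem_mul hu hv)

namespace DFA

variable {α σ : Type*} [DecidableEq σ] (M : DFA α σ)

open Classical in
noncomputable def kstarStep (S : Finset σ) (a : α) : Finset σ :=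
  if ∃ q ∈ S, M.step q a ∈ M.accept then insert M.start (S.image (M.step · a))
  else S.image (M.step · a)

/-- The subset automaton for `M.accepts∗`; the extra state `none` is the accepting initial state. -/
noncomputable def kstar : DFA α (Option (Finset σ)) where
  step s a := some (M.kstarStep (s.getD {M.start}) a)
  start := none
  accept := {s | s.elim True fun S => ∃ q ∈ S, q ∈ M.accept}

variable {M}

theorem mem_kstarStep {S : Finset σ} {a : α} {q : σ} :
    q ∈ M.kstarStep S a ↔
      (∃ p ∈ S, M.step p a = q) ∨ (q = M.start ∧ ∃ p ∈ S, M.step p a ∈ M.accept) := by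
  unfold kstarStep
  split_ifs with h
  · simp only [Finset.mem_insert, Finset.mem_image, h, and_true]
    exact or_comm
  · simp only [Finset.mem_image, h, and_false, or_false]

theorem eval_kstar_append_singleton (w : List α) (a : α) :
    M.kstar.eval (w ++ [a]) = some (M.kstarStep ((M.kstar.eval w).getD {M.start}) a) :=
  M.kstar.eval_append_singleton w a

theorem evalFrom_kstar_some (S : Finset σ) (w : List α) :
    M.kstar.evalFrom (some S) w = some (w.foldl M.kstarStep S) := by
  induction w generalizing S with
  | nil => rfl
  | cons a w ih => exact ih _

theorem mem_acceptsFrom_kstar_some {S : Finset σ} {w : List α} :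
    w ∈ M.kstar.acceptsFrom (some S) ↔ ∃ q ∈ w.foldl M.kstarStep S, q ∈ M.accept := by
  rw [mem_acceptsFrom, evalFrom_kstar_some]
  rfl

theorem mem_getD_eval_kstar_iff {w : List α} {q : σ} :
    q ∈ (M.kstar.eval w).getD {M.start} ↔
      ∃ u v, w = u ++ v ∧ u ∈ M.accepts∗ ∧ M.eval v = q := by
  induction w using List.reverseRecOn generalizing q with
  | nil =>
    change q ∈ ({M.start} : Finset σ) ↔ _
    simp only [Finset.mem_singleton, List.nil_eq_append_iff]
    constructor
    · rintro rfl
      exact ⟨[], [], ⟨rfl, rfl⟩, Language.nil_mem_kstar _, rfl⟩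
    · rintro ⟨_, _, ⟨rfl, rfl⟩, -, rfl⟩
      rfl
  | append_singleton w a ih =>
    rw [eval_kstar_append_singleton, Option.getD_some, mem_kstarStep,
      List.exists_append_eq_append_singleton_iff, Language.append_singleton_mem_kstar_iff]
    simp only [ih, eval_append_singleton, eval_nil, mem_accepts]
    grind

theorem accepts_kstar : M.kstar.accepts = M.accepts∗ := by
  ext w
  cases w using List.reverseRecOn with
  | nil => exact iff_of_true trivial (Language.nil_mem_kstar _)
  | append_singleton w a =>
    obtain ⟨S, hS⟩ : ∃ S, M.kstar.eval (w ++ [a]) = some S :=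
      ⟨_, eval_kstar_append_singleton w a⟩
    have hmem (q : σ) : q ∈ S ↔ ∃ u v, w ++ [a] = u ++ v ∧ u ∈ M.accepts∗ ∧ M.eval v = q := by
      simpa only [hS, Option.getD_some] using mem_getD_eval_kstar_iff (M := M) (w := w ++ [a])
    rw [mem_accepts, hS]
    calc (∃ q ∈ S, q ∈ M.accept)
        ↔ ∃ u v, w ++ [a] = u ++ v ∧ u ∈ M.accepts∗ ∧ v ∈ M.accepts := by
          simp only [hmem, mem_accepts]
          grind
      _ ↔ (w ++ [a] ∈ M.accepts∗ ∧ [] ∈ M.accepts) ∨ w ++ [a] ∈ M.accepts∗ := by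
          rw [List.exists_append_eq_append_singleton_iff, Language.append_singleton_mem_kstar_iff]
      _ ↔ w ++ [a] ∈ M.accepts∗ := or_iff_right_of_imp And.left

theorem start_mem_kstarStep_of_mem_accept {S : Finset σ} {a : α} {q : σ}
    (hq : q ∈ M.kstarStep S a) (hacc : q ∈ M.accept) : M.start ∈ M.kstarStep S a := by
  rw [mem_kstarStep] at hq ⊢
  rcases hq with ⟨p, hp, rfl⟩ | ⟨rfl, hS⟩
  · exact .inr ⟨rfl, p, hp, hacc⟩
  · exact .inr ⟨rfl, hS⟩

theorem kstarStep_nonempty {S : Finset σ} (hS : S.Nonempty) (a : α) :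
    (M.kstarStep S a).Nonempty :=
  let ⟨p, hp⟩ := hS
  ⟨M.step p a, mem_kstarStep.mpr (.inl ⟨p, hp, rfl⟩)⟩

theorem eval_mem_getD_eval_kstar (w : List α) : M.eval w ∈ (M.kstar.eval w).getD {M.start} :=
  mem_getD_eval_kstar_iff.mpr ⟨[], w, rfl, Language.nil_mem_kstar _, rfl⟩

end DFA

/-- State `0` of `L_n` is `none` and state `i + 1` is `some i`, so that `n = k + 2`; the letters
`a` and `b` are `0` and `1`. -/
def cycleSwapDFA (k : ℕ) : DFA (Fin 2) (Option (Fin (k + 1))) where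
  step q c := if c = 0 then q.map (· + 1) else Equiv.swap none (some 0) q
  start := none
  accept := {some (-1)}

theorem reindex_finSuccEquiv_eq_cycleSwapDFA {k : ℕ} (M : DFA (Fin 2) (Fin (k + 2)))
    (hstart : M.start = 0) (haccept : M.accept = {Fin.last (k + 1)})
    (ha : ∀ q : Fin (k + 2),
      (M.step q 0).val = if q.val = 0 then 0 else if q.val = k + 1 then 1 else q.val + 1)
    (hb : ∀ q : Fin (k + 2),
      (M.step q 1).val = if q.val = 0 then 1 else if q.val = 1 then 0 else q.val) :
    DFA.reindex (finSuccEquiv (k + 1)) M = cycleSwapDFA k := by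
  simp only [DFA.reindex, Equiv.coe_fn_mk, cycleSwapDFA, DFA.mk.injEq]
  refine ⟨funext₂ fun s c => ?_, ?_, ?_⟩
  · rw [← Equiv.eq_symm_apply, Fin.ext_iff]
    rcases s with _ | i <;> fin_cases c <;> simp [ha, hb, Equiv.swap_apply_def, Fin.val_add]
    · split_ifs with h
      · rw [h, Nat.mod_self]
      · rw [Nat.mod_eq_of_lt (by omega)]
    · split_ifs <;> simp_all
  · rw [hstart, finSuccEquiv_zero]
  · ext q
    rw [Set.mem_preimage, haccept, Set.mem_singleton_iff, Set.mem_singleton_iff,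
      Equiv.symm_apply_eq, show Fin.last (k + 1) = (-1 : Fin (k + 1)).succ from Fin.ext (by simp),
      finSuccEquiv_succ]

namespace cycleSwapDFA

variable {k : ℕ}

open DFA Fin.NatCast

def rotate (j : Fin (k + 1)) (S : Finset (Option (Fin (k + 1)))) : Finset (Option (Fin (k + 1))) :=
  S.image (Option.map (· + j))

@[simp]
theorem some_mem_rotate {j x : Fin (k + 1)} {S : Finset (Option (Fin (k + 1)))} :
    some x ∈ rotate j S ↔ some (x - j) ∈ S := by
  simp [rotate, ← eq_sub_iff_add_eq]

@[simp]
theorem none_mem_rotate {j : Fin (k + 1)} {S : Finset (Option (Fin (k + 1)))} :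
    none ∈ rotate j S ↔ none ∈ S := by
  simp [rotate]

theorem rotate_rotate (i j : Fin (k + 1)) (S : Finset (Option (Fin (k + 1)))) :
    rotate i (rotate j S) = rotate (j + i) S := by
  ext (_ | x) <;> simp [sub_sub, add_comm]

theorem rotate_zero (S : Finset (Option (Fin (k + 1)))) : rotate 0 S = S := by
  ext (_ | x) <;> simp

theorem card_rotate (j : Fin (k + 1)) (S : Finset (Option (Fin (k + 1)))) :
    (rotate j S).card = S.card :=
  Finset.card_image_of_injective _ (Option.map_injective (add_left_injective j))

@[simp]
theorem accept_cycleSwapDFA : (cycleSwapDFA k).accept = {some (-1)} := rfl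

@[simp]
theorem some_mem_kstarStep_zero {x : Fin (k + 1)} {S : Finset (Option (Fin (k + 1)))} :
    some x ∈ (cycleSwapDFA k).kstarStep S 0 ↔ some (x - 1) ∈ S := by
  simp [mem_kstarStep, cycleSwapDFA, ← eq_sub_iff_add_eq]

@[simp]
theorem none_mem_kstarStep_zero {S : Finset (Option (Fin (k + 1)))} :
    none ∈ (cycleSwapDFA k).kstarStep S 0 ↔ none ∈ S ∨ some (-1 - 1) ∈ S := by
  simp [mem_kstarStep, cycleSwapDFA, ← eq_sub_iff_add_eq]

@[simp]
theorem some_mem_kstarStep_one {x : Fin (k + 1)} {S : Finset (Option (Fin (k + 1)))} :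
    some x ∈ (cycleSwapDFA k).kstarStep S 1 ↔ if x = 0 then none ∈ S else some x ∈ S := by
  simp only [mem_kstarStep, cycleSwapDFA, one_ne_zero, if_false, Equiv.swap_apply_eq_iff,
    exists_eq_right, reduceCtorEq, false_and, or_false]
  split_ifs with hx
  · rw [hx, Equiv.swap_apply_right]
  · rw [Equiv.swap_apply_of_ne_of_ne (by simp) (by simpa using hx)]

@[simp]
theorem none_mem_kstarStep_one (hk : k ≠ 0) {S : Finset (Option (Fin (k + 1)))} :
    none ∈ (cycleSwapDFA k).kstarStep S 1 ↔ some 0 ∈ S ∨ some (-1) ∈ S := by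
  have hswap : Equiv.swap none (some 0) (some (-1 : Fin (k + 1))) = some (-1) :=
    Equiv.swap_apply_of_ne_of_ne (by simp) (by simpa [Fin.ext_iff] using hk)
  simp only [mem_kstarStep, cycleSwapDFA, one_ne_zero, if_false, Set.mem_singleton_iff,
    Equiv.swap_apply_eq_iff, Equiv.swap_apply_left, hswap, exists_eq_right, true_and]

def Reachable (S : Finset (Option (Fin (k + 1)))) : Prop :=
  some S ∈ Set.range (cycleSwapDFA k).kstar.eval

variable {S : Finset (Option (Fin (k + 1)))}

theorem reachable_kstarStep (h : Reachable S) (c : Fin 2) :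
    Reachable ((cycleSwapDFA k).kstarStep S c) := by
  obtain ⟨w, hw⟩ := h
  exact ⟨w ++ [c], by rw [eval_kstar_append_singleton, hw, Option.getD_some]⟩

theorem reachable_singleton_none : Reachable ({none} : Finset (Option (Fin (k + 1)))) := by
  refine ⟨[0], ?_⟩
  change some ((cycleSwapDFA k).kstarStep {none} 0) = _
  congr 1
  ext (_ | x) <;> simp

theorem reachable_rotate (h : Reachable S) (hS : none ∈ S) (j : Fin (k + 1)) :
    Reachable (rotate j S) := by
  suffices ∀ n : ℕ, Reachable (rotate (n : Fin (k + 1)) S) by simpa using this j.val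
  intro n
  induction n with
  | zero => simpa [rotate_zero] using h
  | succ n ih =>
    have hstep : (cycleSwapDFA k).kstarStep (rotate (n : Fin (k + 1)) S) 0 =
        rotate ((n + 1 : ℕ) : Fin (k + 1)) S := by
      ext (_ | x) <;> simp [hS, sub_sub, add_comm]
    exact hstep ▸ reachable_kstarStep ih 0

theorem reachable_rotate_of_lt (h : Reachable S) (n : ℕ)
    (hS : ∀ x, some x ∈ S → x.val + n < k) : Reachable (rotate (n : Fin (k + 1)) S) := by
  induction n generalizing S with
  | zero => simpa [rotate_zero] using h
  | succ n ih =>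
    have hlst : some (-1 - 1) ∉ S := fun hmem => by
      have hlt := hS _ hmem
      have hval := Fin.val_add_natCast_of_lt (x := (-1 - 1 : Fin (k + 1))) (m := 1) (by omega)
      rw [Nat.cast_one, sub_add_cancel, Fin.coe_neg_one] at hval
      omega
    have hstep : (cycleSwapDFA k).kstarStep S 0 = rotate 1 S := by
      ext (_ | x) <;> simp [hlst]
    have hrot := ih (hstep ▸ reachable_kstarStep h 0) fun y hy => by
      rw [some_mem_rotate] at hy
      have hlt := hS _ hy
      have hval := Fin.val_add_natCast_of_lt (x := y - 1) (m := 1) (by omega)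
      rw [Nat.cast_one, sub_add_cancel] at hval
      omega
    rwa [rotate_rotate, add_comm, ← Nat.cast_succ] at hrot

theorem reachable_of_insert_none_erase (hk : k ≠ 0)
    (h : Reachable (insert none (S.erase (some 0)))) (h0 : some 0 ∈ S) (hnone : none ∉ S)
    (hlst : some (-1) ∉ S) : Reachable S := by
  have hstep : (cycleSwapDFA k).kstarStep (insert none (S.erase (some 0))) 1 = S := by
    ext (_ | x)
    · simp [hk, hnone, hlst]
    · by_cases hx : x = 0 <;> simp [hx, h0]
  exact hstep ▸ reachable_kstarStep h 1

theorem reachable_of_erase_some_zero (hk : k ≠ 0) (h : Reachable (S.erase (some 0)))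
    (hnone : none ∈ S) (h0 : some 0 ∈ S) (hlst : some (-1) ∈ S) : Reachable S := by
  have hne : (-1 : Fin (k + 1)) ≠ 0 := by simpa [Fin.ext_iff] using hk
  have hstep : (cycleSwapDFA k).kstarStep (S.erase (some 0)) 1 = S := by
    ext (_ | x)
    · simp [hk, hnone, hlst, hne]
    · by_cases hx : x = 0 <;> simp [hx, h0, hnone]
  exact hstep ▸ reachable_kstarStep h 1

theorem reachable_rotate_one_of_erase_none (h : Reachable (S.erase none)) (hnone : none ∈ S)
    (hS : some (-1 - 1) ∈ S) : Reachable (rotate 1 S) := by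
  have hstep : (cycleSwapDFA k).kstarStep (S.erase none) 0 = rotate 1 S := by
    ext (_ | x) <;> simp [hnone, hS]
  exact hstep ▸ reachable_kstarStep h 0

/-- Rotated so that its least element becomes `some 0`, `S` arises by `b` from a set of the same
size containing `none`; `a^m` then rotates it back without ever reaching the final state. -/
theorem reachable_of_none_notMem (hk : k ≠ 0) {c : ℕ}
    (ih : ∀ S : Finset (Option (Fin (k + 1))), none ∈ S → S.card = c + 1 → Reachable S)
    (hnone : none ∉ S) (hlst : some (-1) ∉ S) (hcard : S.card = c + 1) : Reachable S := by
  have hX : S.eraseNone.Nonempty := by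
    obtain ⟨_ | x, hx⟩ := Finset.card_pos.mp (by omega : 0 < S.card)
    · exact absurd hx hnone
    · exact ⟨x, Finset.mem_eraseNone.mpr hx⟩
  set m := S.eraseNone.min' hX
  have hm : some m ∈ S := Finset.mem_eraseNone.mp (S.eraseNone.min'_mem hX)
  have hmin (x : Fin (k + 1)) (hx : some x ∈ S) : m ≤ x :=
    S.eraseNone.min'_le x (Finset.mem_eraseNone.mpr hx)
  set S₀ := rotate (-m) S
  have h0 : some 0 ∈ S₀ := by simpa [S₀] using hm
  have hlst₀ : some (-1) ∉ S₀ := by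
    rw [some_mem_rotate, sub_neg_eq_add, neg_add_eq_sub]
    intro hmem
    by_cases hm0 : m = 0
    · exact hlst (by simpa [hm0] using hmem)
    · exact (hmin _ hmem).not_gt (Fin.sub_one_lt_iff.mpr (Fin.pos_iff_ne_zero.mpr hm0))
  have hnone₀ : none ∉ S₀ := fun h => hnone (none_mem_rotate.mp h)
  have hreach₀ : Reachable S₀ := by
    refine reachable_of_insert_none_erase hk (ih _ (Finset.mem_insert_self _ _) ?_)
      h0 hnone₀ hlst₀
    rw [Finset.card_insert_of_notMem (by simp [hnone₀]), Finset.card_erase_of_mem h0, card_rotate,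
      hcard, Nat.add_sub_cancel]
  have hrise := reachable_rotate_of_lt hreach₀ m.val fun x hx => by
    rw [some_mem_rotate, sub_neg_eq_add] at hx
    have hle := Fin.le_iff_val_le_val.mp (hmin _ hx)
    have hne : x + m ≠ -1 := fun h => hlst (h ▸ hx)
    rw [Ne, Fin.ext_iff, Fin.coe_neg_one, Fin.val_add_eq_ite] at hne
    rw [Fin.val_add_eq_ite] at hle
    have := x.isLt
    split_ifs at hle hne <;> omega
  rwa [Fin.cast_val_eq_self, rotate_rotate, neg_add_cancel, rotate_zero] at hrise

/-- If `some x ∈ S` but `some (x + 1) ∉ S`, rotating `x` to `-1 - 1` gives a set whose part without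
`none` is reachable; `a` then adds `none` back, and a rotation returns to `S`. Otherwise `S` is
everything, which `b` reaches from `S.erase (some 0)`. -/
theorem reachable_of_none_mem (hk : k ≠ 0) :
    ∀ c : ℕ, ∀ S : Finset (Option (Fin (k + 1))), none ∈ S → S.card = c + 1 → Reachable S
  | 0, S, hnone, hcard => by
    obtain ⟨q, rfl⟩ := Finset.card_eq_one.mp hcard
    rw [← Finset.mem_singleton.mp hnone]
    exact reachable_singleton_none
  | c + 1, S, hnone, hcard => by
    have ih := reachable_of_none_mem hk c
    by_cases hclosed : ∀ x, some x ∈ S → some (x + 1) ∈ S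
    · have hpos : 0 < (S.erase none).card := by rw [Finset.card_erase_of_mem hnone, hcard]; omega
      obtain ⟨_ | x₀, hx₀⟩ := Finset.card_pos.mp hpos
      · simp at hx₀
      have hiter (n : ℕ) : some (x₀ + n) ∈ S := by
        induction n with
        | zero => simpa using Finset.mem_of_mem_erase hx₀
        | succ n ihn => simpa [add_assoc] using hclosed _ ihn
      have hall (y : Fin (k + 1)) : some y ∈ S := by simpa using hiter (y - x₀).val
      refine reachable_of_erase_some_zero hk (ih _ (by simpa using hnone) ?_)
        hnone (hall 0) (hall (-1))
      rw [Finset.card_erase_of_mem (hall 0), hcard]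
      rfl
    · push Not at hclosed
      obtain ⟨x, hx, hx1⟩ := hclosed
      set S₁ := rotate (-1 - 1 - x) S
      have hnone₁ : none ∈ S₁ := none_mem_rotate.mpr hnone
      have h2 : some (-1 - 1) ∈ S₁ := by simpa [S₁] using hx
      have h1 : some (-1) ∉ S₁ := by
        rw [some_mem_rotate, show (-1 - (-1 - 1 - x) : Fin (k + 1)) = x + 1 by abel]
        exact hx1
      have hT : Reachable (S₁.erase none) := by
        refine reachable_of_none_notMem hk ih (by simp) (by simpa using h1) ?_
        rw [Finset.card_erase_of_mem hnone₁, card_rotate, hcard]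
        rfl
      have hS := reachable_rotate (reachable_rotate_one_of_erase_none hT hnone₁ h2)
        (none_mem_rotate.mpr hnone₁) (1 + x)
      rwa [rotate_rotate, rotate_rotate,
        show (-1 - 1 - x + (1 + (1 + x)) : Fin (k + 1)) = 0 by abel, rotate_zero] at hS

/-- The sets `{0} ∪ S` and the nonempty `S ⊆ {1, …, n-2}` of the paper. -/
def Admissible (S : Finset (Option (Fin (k + 1)))) : Prop :=
  S.Nonempty ∧ (some (-1) ∈ S → none ∈ S)

instance : DecidablePred (Admissible (k := k)) := fun _ => instDecidableAnd

theorem admissible_kstarStep (hS : S.Nonempty) (c : Fin 2) :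
    Admissible ((cycleSwapDFA k).kstarStep S c) :=
  ⟨kstarStep_nonempty hS c, fun h => start_mem_kstarStep_of_mem_accept h rfl⟩

theorem reachable_of_admissible (hk : k ≠ 0) (hS : Admissible S) : Reachable S := by
  obtain ⟨c, hc⟩ := Nat.exists_eq_add_one_of_ne_zero (Finset.card_ne_zero.mpr hS.1)
  by_cases hnone : none ∈ S
  · exact reachable_of_none_mem hk c S hnone hc
  · exact reachable_of_none_notMem hk (reachable_of_none_mem hk c) hnone (mt hS.2 hnone) hc

theorem range_eval_kstar (hk : k ≠ 0) :
    Set.range (cycleSwapDFA k).kstar.eval = insert none (some '' {S | Admissible S}) := by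
  ext s
  constructor
  · rintro ⟨w, rfl⟩
    cases w using List.reverseRecOn with
    | nil => exact .inl rfl
    | append_singleton w c =>
      exact .inr ⟨_, admissible_kstarStep ⟨_, eval_mem_getD_eval_kstar w⟩ c,
        (eval_kstar_append_singleton w c).symm⟩
  · rintro (rfl | ⟨S, hS, rfl⟩)
    · exact ⟨[], rfl⟩
    · exact reachable_of_admissible hk hS

theorem card_filter_admissible_add_one :
    (Finset.univ.filter (Admissible (k := k))).card + 1 = 2 ^ (k + 1) + 2 ^ k := by
  have hsplit := Finset.card_filter_add_card_filter_not (s := Finset.univ) (Admissible (k := k))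
  have hbad : Finset.univ.filter (fun S : Finset (Option (Fin (k + 1))) => ¬ Admissible S) =
      insert ∅ (Finset.univ.filter fun S : Finset (Option (Fin (k + 1))) =>
        some (-1) ∈ S ∧ none ∉ S) := by
    ext S
    simp only [Admissible, Finset.mem_filter, Finset.mem_univ, true_and, Finset.mem_insert,
      not_and_or, Finset.not_nonempty_iff_eq_empty, Classical.not_imp]
  rw [hbad, Finset.card_insert_of_notMem (by simp), Finset.card_filter_mem_and_notMem (by simp),
    Finset.card_univ, Fintype.card_finset, Fintype.card_option, Fintype.card_fin] at hsplit
  rw [show k + 1 + 1 - 2 = k by omega, pow_succ, pow_succ] at hsplit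
  rw [pow_succ]
  omega

theorem natCard_range_eval_kstar (hk : k ≠ 0) :
    Nat.card (Set.range (cycleSwapDFA k).kstar.eval) = 2 ^ (k + 1) + 2 ^ k := by
  rw [range_eval_kstar hk, Nat.card_coe_set_eq, Set.ncard_insert_of_notMem (by simp),
    Set.ncard_image_of_injective _ (Option.some_injective _),
    show {S | Admissible S} = ↑(Finset.univ.filter (Admissible (k := k))) by simp,
    Set.ncard_coe_finset, card_filter_admissible_add_one]

theorem some_mem_foldl_replicate_zero (n : ℕ) (x : Fin (k + 1))
    (S : Finset (Option (Fin (k + 1)))) :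
    some x ∈ (List.replicate n 0).foldl (cycleSwapDFA k).kstarStep S ↔ some (x - n) ∈ S := by
  induction n generalizing S with
  | zero => simp
  | succ n ih => simp [List.replicate_succ, ih, sub_sub]

def testWord : Option (Fin (k + 1)) → List (Fin 2)
  | none => 1 :: List.replicate k 0
  | some x => List.replicate (-1 - x).val 0

theorem testWord_mem_acceptsFrom_iff (q : Option (Fin (k + 1)))
    (S : Finset (Option (Fin (k + 1)))) :
    testWord q ∈ (cycleSwapDFA k).kstar.acceptsFrom (some S) ↔ q ∈ S := by
  rw [mem_acceptsFrom_kstar_some]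
  simp only [accept_cycleSwapDFA, Set.mem_singleton_iff, exists_eq_right]
  rcases q with _ | x
  · have hlast : (-1 - Fin.last k : Fin (k + 1)) = 0 := sub_eq_zero.mpr (Fin.ext (by simp))
    simp [testWord, some_mem_foldl_replicate_zero, hlast]
  · simp [testWord, some_mem_foldl_replicate_zero]

theorem injective_acceptsFrom_kstar (hk : k ≠ 0) :
    Function.Injective (cycleSwapDFA k).kstar.acceptsFrom := by
  have hne : (-1 : Fin (k + 1)) ≠ 0 := by simpa [Fin.ext_iff] using hk
  have hnone_ne (S : Finset (Option (Fin (k + 1)))) :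
      (cycleSwapDFA k).kstar.acceptsFrom none ≠ (cycleSwapDFA k).kstar.acceptsFrom (some S) := by
    intro h
    have hlst : some (-1) ∈ S := by
      have hnil : [] ∈ (cycleSwapDFA k).kstar.acceptsFrom (some S) := by rw [← h]; trivial
      simpa [mem_acceptsFrom_kstar_some] using hnil
    have hb : [1] ∈ (cycleSwapDFA k).kstar.acceptsFrom (some S) := by
      simpa [mem_acceptsFrom_kstar_some, hne] using hlst
    have hb' : [1] ∉ (cycleSwapDFA k).kstar.acceptsFrom (some {none}) := by
      simp [mem_acceptsFrom_kstar_some, hne]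
    exact hb' (by rw [← h] at hb; exact hb)
  rintro (_ | S) (_ | T) h
  · rfl
  · exact absurd h (hnone_ne T)
  · exact absurd h.symm (hnone_ne S)
  · congr 1
    ext q
    rw [← testWord_mem_acceptsFrom_iff, h, testWord_mem_acceptsFrom_iff]

end cycleSwapDFA

/-- For `n ≥ 3`, the language `L_n` of the DFA over `{a,b}` (encoded as `Fin 2`:
`a = 0 : (1,…,n−1)` fixing `0`, `b = 1 : (0,1)`; initial state `0`; final state `n−1`)
has `stateComplexity (L_n∗) = 2^(n−1) + 2^(n−2)`. -/
theorem star_complexity_of_witness (n : ℕ) (hn : 3 ≤ n) (M : DFA (Fin 2) (Fin n))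
    (hstart : M.start = ⟨0, by omega⟩)
    (haccept : M.accept = {⟨n - 1, by omega⟩})
    (ha : ∀ q : Fin n,
      (M.step q 0).val = if q.val = 0 then 0 else if q.val = n - 1 then 1 else q.val + 1)
    (hb : ∀ q : Fin n,
      (M.step q 1).val = if q.val = 0 then 1 else if q.val = 1 then 0 else q.val) :
    stateComplexity (M.accepts∗) = 2 ^ (n - 1) + 2 ^ (n - 2) := by
  obtain ⟨k, rfl⟩ : ∃ k, n = k + 2 := ⟨n - 2, by omega⟩
  have hk : k ≠ 0 := by omega
  have hM : M.accepts = (cycleSwapDFA k).accepts := by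
    rw [← reindex_finSuccEquiv_eq_cycleSwapDFA M hstart haccept ha hb, DFA.accepts_reindex]
  rw [hM, ← DFA.accepts_kstar,
    DFA.stateComplexity_accepts _ (cycleSwapDFA.injective_acceptsFrom_kstar hk),
    cycleSwapDFA.natCard_range_eval_kstar hk]
  rfl
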